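/- In a multiplicative lattice L with 1 compact, c_z(ab) = c_z(a ∧ b) = c_z(a) ∧ c_z(b) for all a, b ∈ L, where c_z is the z-closure operator. -/

import Mathlib

/-- A multiplicative lattice: a complete lattice with an associative, commutative
multiplication distributing over arbitrary joins, with the top element as unit. -/
class MultiplicativeLattice (L : Type*) extends CompleteLattice L, CommMonoid L where
  mul_sSup : ∀ (a : L) (s : Set L), a * sSup s = ⨆ b ∈ s, a * b
  one_eq_top : (1 : L) = ⊤

variable {L : Type*} [MultiplicativeLattice L]

/-- A maximal element: proper, and anything properly above it up to (but not) ⊤ equals it. -/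
def IsMaxElt (m : L) : Prop := m ≠ ⊤ ∧ ∀ x : L, m ≤ x → x ≠ ⊤ → m = x

/-- The set of maximal elements above `a`. -/
def MSet (a : L) : Set L := {m | IsMaxElt m ∧ a ≤ m}

/-- A z-element: `M_a ⊇ M_b` and `b ≤ x` imply `a ≤ x`. -/
def IsZ (x : L) : Prop := ∀ a b : L, MSet b ⊆ MSet a → b ≤ x → a ≤ x

/-- The top element 1 = ⊤ is compact. -/
def OneCompact (L : Type*) [MultiplicativeLattice L] : Prop :=
  ∀ s : Set L, sSup s = ⊤ → ∃ t : Finset L, ↑t ⊆ s ∧ t.sup id = ⊤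

/-- The z-closure of an element: meet of all z-elements above it. -/
noncomputable def zCl (a : L) : L := sInf {z : L | IsZ z ∧ a ≤ z}

/-! Maximal elements are prime, so a maximal element lies above `a * b`, or above `a ⊓ b`, exactly
when it lies above `a` or above `b`. The z-closure of `x` depends only on the set of maximal elements
above `x`, and `zCl a` has the same maximal elements above it as `a`; both equalities follow. -/

namespace MultiplicativeLattice

protected theorem mul_sup (a x y : L) : a * (x ⊔ y) = a * x ⊔ a * y := by
  rw [← sSup_pair, mul_sSup]
  simp [iSup_or, iSup_sup_eq]

protected theorem mul_top (a : L) : a * ⊤ = a := by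
  rw [← one_eq_top, mul_one]

theorem mul_le_left (a b : L) : a * b ≤ a :=
  calc a * b ≤ a * b ⊔ a * ⊤ := le_sup_left
    _ = a := by rw [← MultiplicativeLattice.mul_sup, sup_top_eq, MultiplicativeLattice.mul_top]

theorem mul_le_right (a b : L) : a * b ≤ b :=
  mul_comm a b ▸ mul_le_left b a

end MultiplicativeLattice

open MultiplicativeLattice

theorem IsMaxElt.le_or_le_of_mul_le {m a b : L} (hm : IsMaxElt m) (hab : a * b ≤ m) :
    a ≤ m ∨ b ≤ m := by
  refine or_iff_not_imp_left.2 fun ha => ?_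
  have htop : m ⊔ a = ⊤ := by
    by_contra hne
    exact ha (le_sup_right.trans_eq (hm.2 _ le_sup_left hne).symm)
  calc b = b * (m ⊔ a) := by rw [htop, MultiplicativeLattice.mul_top]
    _ = b * m ⊔ a * b := by rw [MultiplicativeLattice.mul_sup, mul_comm b a]
    _ ≤ m := sup_le (mul_le_right b m) hab

theorem IsMaxElt.mul_le_iff {m a b : L} (hm : IsMaxElt m) : a * b ≤ m ↔ a ≤ m ∨ b ≤ m :=
  ⟨hm.le_or_le_of_mul_le, fun h => h.elim (mul_le_left a b).trans (mul_le_right a b).trans⟩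

theorem IsMaxElt.inf_le_iff {m a b : L} (hm : IsMaxElt m) : a ⊓ b ≤ m ↔ a ≤ m ∨ b ≤ m :=
  ⟨fun h => hm.le_or_le_of_mul_le ((le_inf (mul_le_left a b) (mul_le_right a b)).trans h),
    fun h => h.elim inf_le_left.trans inf_le_right.trans⟩

theorem IsMaxElt.isZ {m : L} (hm : IsMaxElt m) : IsZ m :=
  fun _ _ hsub hb => (hsub ⟨hm, hb⟩).2

theorem mset_mul (a b : L) : MSet (a * b) = MSet a ∪ MSet b := by
  ext m
  exact (and_congr_right fun hm => hm.mul_le_iff).trans and_or_left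

theorem mset_inf (a b : L) : MSet (a ⊓ b) = MSet a ∪ MSet b := by
  ext m
  exact (and_congr_right fun hm => hm.inf_le_iff).trans and_or_left

theorem le_zCl (a : L) : a ≤ zCl a :=
  le_sInf fun _ hz => hz.2

theorem zCl_le_of_isZ {a z : L} (hz : IsZ z) (haz : a ≤ z) : zCl a ≤ z :=
  sInf_le ⟨hz, haz⟩

theorem isZ_zCl (a : L) : IsZ (zCl a) :=
  fun p q hsub hq => le_sInf fun _ hz => hz.1 p q hsub (hq.trans (sInf_le hz))

theorem zCl_mono {a b : L} (hab : a ≤ b) : zCl a ≤ zCl b :=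
  zCl_le_of_isZ (isZ_zCl b) (hab.trans (le_zCl b))

theorem zCl_le_zCl_of_mset_subset {a b : L} (h : MSet b ⊆ MSet a) : zCl a ≤ zCl b :=
  zCl_le_of_isZ (isZ_zCl b) (isZ_zCl b a b h (le_zCl b))

theorem zCl_eq_of_mset_eq {a b : L} (h : MSet a = MSet b) : zCl a = zCl b :=
  le_antisymm (zCl_le_zCl_of_mset_subset h.ge) (zCl_le_zCl_of_mset_subset h.le)

theorem mset_zCl (a : L) : MSet (zCl a) = MSet a := by
  ext m
  exact and_congr_right fun hm => ⟨(le_zCl a).trans, fun ham => zCl_le_of_isZ hm.isZ ham⟩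

theorem stmt14_general (a b : L) :
    zCl (a * b) = zCl (a ⊓ b) ∧ zCl (a ⊓ b) = zCl a ⊓ zCl b := by
  refine ⟨zCl_eq_of_mset_eq (by rw [mset_mul, mset_inf]), le_antisymm ?_ ?_⟩
  · exact le_inf (zCl_mono inf_le_left) (zCl_mono inf_le_right)
  · calc zCl a ⊓ zCl b ≤ zCl (zCl a ⊓ zCl b) := le_zCl _
      _ = zCl (a ⊓ b) := zCl_eq_of_mset_eq (by rw [mset_inf, mset_inf, mset_zCl, mset_zCl])

theorem stmt14 (h : OneCompact L) (a b : L) :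
    zCl (a * b) = zCl (a ⊓ b) ∧ zCl (a ⊓ b) = zCl a ⊓ zCl b :=
  stmt14_general a b
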